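/- Let n ∈ ℕ with n ≥ 2, let G be a nonempty bounded subset of ℝⁿ, and let θ ∈ (0,1]. Let Z ∈ 𝒦_{n−1,n,1}(G) and let g : G → ℂ be bounded and θ-Hölder continuous, with ‖g‖_{C^{0,θ}(G)} ≡ sup_G |g| + sup{ |g(x)−g(y)|/|x−y|^θ : x,y ∈ G, x ≠ y }. Define H[Z,g](x,y) ≡ (g(x) − g(y)) Z(x,y) for (x,y) ∈ (G×G)∖Δ_G. Then H[Z,g] ∈ 𝒦_{n−1−θ, n−1, θ}(G) and ‖H[Z,g]‖_{𝒦_{n−1−θ,n−1,θ}(G)} ≤ 2ⁿ ‖Z‖_{𝒦_{n−1,n,1}(G)} ‖g‖_{C^{0,θ}(G)}; in particular the map (Z,g) ↦ H[Z,g] is bilinear and continuous from 𝒦_{n−1,n,1}(G) × C^{0,θ}(G) to 𝒦_{n−1−θ,n−1,θ}(G). -/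

import Mathlib

open Metric Set

/-- The set of values `‖x-y‖^γ₁ ‖K(x,y)‖` entering the first seminorm of the
kernel class `𝒦_{γ₁,γ₂,γ₃}(G)`. -/
def kerSet1 {n : ℕ} (γ₁ : ℝ) (G : Set (EuclideanSpace ℝ (Fin n)))
    (K : EuclideanSpace ℝ (Fin n) × EuclideanSpace ℝ (Fin n) → ℂ) : Set ℝ :=
  {t | ∃ x ∈ G, ∃ y ∈ G, x ≠ y ∧ t = ‖x - y‖ ^ γ₁ * ‖K (x, y)‖}

/-- The set of values `(‖x'-y‖^γ₂/‖x'-x''‖^γ₃) ‖K(x',y) - K(x'',y)‖` entering the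
second seminorm of the kernel class `𝒦_{γ₁,γ₂,γ₃}(G)`. -/
def kerSet2 {n : ℕ} (γ₂ γ₃ : ℝ) (G : Set (EuclideanSpace ℝ (Fin n)))
    (K : EuclideanSpace ℝ (Fin n) × EuclideanSpace ℝ (Fin n) → ℂ) : Set ℝ :=
  {t | ∃ x' ∈ G, ∃ x'' ∈ G, ∃ y ∈ G, x' ≠ x'' ∧ 2 * ‖x' - x''‖ ≤ ‖x' - y‖ ∧
    t = ‖x' - y‖ ^ γ₂ / ‖x' - x''‖ ^ γ₃ * ‖K (x', y) - K (x'', y)‖}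

/-- Membership in the kernel class `𝒦_{γ₁,γ₂,γ₃}(G)`. -/
def memKer {n : ℕ} (γ₁ γ₂ γ₃ : ℝ) (G : Set (EuclideanSpace ℝ (Fin n)))
    (K : EuclideanSpace ℝ (Fin n) × EuclideanSpace ℝ (Fin n) → ℂ) : Prop :=
  ContinuousOn K ((G ×ˢ G) \ {p | p.1 = p.2}) ∧
  BddAbove (kerSet1 γ₁ G K) ∧ BddAbove (kerSet2 γ₂ γ₃ G K)

/-- The norm `‖·‖_{𝒦_{γ₁,γ₂,γ₃}(G)}` of the kernel class. -/
noncomputable def kerNorm {n : ℕ} (γ₁ γ₂ γ₃ : ℝ) (G : Set (EuclideanSpace ℝ (Fin n)))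
    (K : EuclideanSpace ℝ (Fin n) × EuclideanSpace ℝ (Fin n) → ℂ) : ℝ :=
  sSup (kerSet1 γ₁ G K) + sSup (kerSet2 γ₂ γ₃ G K)

/-- The sup-norm part of the `C^{0,θ}(G)` norm of `g`. -/
def holderSet0 {n : ℕ} (G : Set (EuclideanSpace ℝ (Fin n)))
    (g : EuclideanSpace ℝ (Fin n) → ℂ) : Set ℝ :=
  {t | ∃ x ∈ G, t = ‖g x‖}

/-- The Hölder-quotient part of the `C^{0,θ}(G)` norm of `g`. -/
def holderSetθ {n : ℕ} (θ : ℝ) (G : Set (EuclideanSpace ℝ (Fin n)))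
    (g : EuclideanSpace ℝ (Fin n) → ℂ) : Set ℝ :=
  {t | ∃ x ∈ G, ∃ y ∈ G, x ≠ y ∧ t = ‖g x - g y‖ / ‖x - y‖ ^ θ}

/-- The norm of the Hölder space `C^{0,θ}(G)`. -/
noncomputable def holderNorm {n : ℕ} (θ : ℝ) (G : Set (EuclideanSpace ℝ (Fin n)))
    (g : EuclideanSpace ℝ (Fin n) → ℂ) : ℝ :=
  sSup (holderSet0 G g) + sSup (holderSetθ θ G g)


/-!
Split `H(x',y) - H(x'',y) = (g x' - g y)(Z(x',y) - Z(x'',y)) + (g x' - g x'') Z(x'',y)`.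
With `a = |x'-x''|`, `b = |x'-y| ≥ 2a` and `c = |x''-y| ≥ b/2`, the first term is bounded through the
regularity seminorm of `Z` and the Hölder bound `|g x' - g y| ≤ [g]_θ b^θ`, leaving the harmless factor
`(a/b)^(1-θ) ≤ 1`; the second through the size seminorm of `Z` at `(x'',y)` and
`|g x' - g x''| ≤ [g]_θ a^θ`, leaving `(b/c)^(n-1) ≤ 2^(n-1)`. Together with the trivial
estimate of the size seminorm this gives the constant `1 + 2^(n-1) ≤ 2^n`.
-/

/-- The kernel `H[Z,g]` of the commutator of multiplication by `g` with the integral operator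
of kernel `Z`. -/
def commKernel {E : Type*} (g : E → ℂ) (Z : E × E → ℂ) : E × E → ℂ :=
  fun p => (g p.1 - g p.2) * Z p

theorem norm_commKernel_sub_le {E : Type*} (g : E → ℂ) (Z : E × E → ℂ) (x' x'' y : E) :
    ‖commKernel g Z (x', y) - commKernel g Z (x'', y)‖ ≤
      ‖g x' - g y‖ * ‖Z (x', y) - Z (x'', y)‖ + ‖g x' - g x''‖ * ‖Z (x'', y)‖ := by
  have : commKernel g Z (x', y) - commKernel g Z (x'', y) =
      (g x' - g y) * (Z (x', y) - Z (x'', y)) + (g x' - g x'') * Z (x'', y) := by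
    simp only [commKernel]; ring
  rw [this, ← norm_mul, ← norm_mul]
  exact norm_add_le _ _

section Pointwise

variable {E : Type*} [NormedAddCommGroup E]

theorem continuousOn_of_norm_sub_le_rpow {F : Type*} [SeminormedAddCommGroup F] {f : E → F}
    {s : Set E} {L θ : ℝ} (hθ : 0 < θ) (hf : ∀ x ∈ s, ∀ y ∈ s, ‖f x - f y‖ ≤ L * ‖x - y‖ ^ θ) :
    ContinuousOn f s := by
  intro x hx
  rw [ContinuousWithinAt, tendsto_iff_norm_sub_tendsto_zero]
  have hlim : Filter.Tendsto (fun y => L * ‖y - x‖ ^ θ) (nhdsWithin x s) (nhds 0) := by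
    have : Continuous fun y : E => L * ‖y - x‖ ^ θ := by fun_prop (disch := exact hθ.le)
    simpa [Real.zero_rpow hθ.ne'] using (this.tendsto x).mono_left nhdsWithin_le_nhds
  exact squeeze_zero' (Filter.Eventually.of_forall fun _ => norm_nonneg _)
    (eventually_nhdsWithin_of_forall fun y hy => hf y hy x hx) hlim

theorem rpow_sub_mul_norm_commKernel_le {g : E → ℂ} {Z : E × E → ℂ} {x y : E} {γ θ L : ℝ}
    (hxy : x ≠ y) (hg : ‖g x - g y‖ ≤ L * ‖x - y‖ ^ θ) :
    ‖x - y‖ ^ (γ - θ) * ‖commKernel g Z (x, y)‖ ≤ L * (‖x - y‖ ^ γ * ‖Z (x, y)‖) := by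
  have hr : 0 < ‖x - y‖ := norm_sub_pos_iff.mpr hxy
  calc ‖x - y‖ ^ (γ - θ) * ‖commKernel g Z (x, y)‖
      = ‖x - y‖ ^ (γ - θ) * ‖g x - g y‖ * ‖Z (x, y)‖ := by
        rw [commKernel, norm_mul, mul_assoc]
    _ ≤ ‖x - y‖ ^ (γ - θ) * (L * ‖x - y‖ ^ θ) * ‖Z (x, y)‖ := by gcongr
    _ = L * (‖x - y‖ ^ γ * ‖Z (x, y)‖) := by
        rw [Real.rpow_sub hr]; field_simp

theorem rpow_mul_commKernel_sub_le {g : E → ℂ} {Z : E × E → ℂ} {x' x'' y : E}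
    {γ θ L M₁ M₂ : ℝ} (hγ : 0 ≤ γ) (hθ : θ ≤ 1) (hL : 0 ≤ L)
    (hne : x' ≠ x'') (hsep : 2 * ‖x' - x''‖ ≤ ‖x' - y‖)
    (hgy : ‖g x' - g y‖ ≤ L * ‖x' - y‖ ^ θ) (hgx : ‖g x' - g x''‖ ≤ L * ‖x' - x''‖ ^ θ)
    (hZ₁ : ‖x'' - y‖ ^ γ * ‖Z (x'', y)‖ ≤ M₁)
    (hZ₂ : ‖x' - y‖ ^ (γ + 1) / ‖x' - x''‖ ^ (1 : ℝ) * ‖Z (x', y) - Z (x'', y)‖ ≤ M₂) :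
    ‖x' - y‖ ^ γ / ‖x' - x''‖ ^ θ * ‖commKernel g Z (x', y) - commKernel g Z (x'', y)‖ ≤
      L * M₂ + 2 ^ γ * L * M₁ := by
  set a := ‖x' - x''‖
  set b := ‖x' - y‖
  set c := ‖x'' - y‖
  have ha : 0 < a := norm_sub_pos_iff.mpr hne
  have hb : 0 < b := by linarith
  have hbc : b ≤ a + c := by simpa [a, c] using norm_sub_le_norm_sub_add_norm_sub x' x'' y
  have hc : 0 < c := by linarith
  have hab : a / b ≤ 1 := (div_le_one hb).mpr (by linarith)
  have hbc2 : b / c ≤ 2 := (div_le_iff₀ hc).mpr (by linarith)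
  have hA : b ^ γ / a ^ θ * b ^ θ = (a / b) ^ (1 - θ) * (b ^ (γ + 1) / a ^ (1 : ℝ)) := by
    rw [Real.div_rpow ha.le hb.le, Real.rpow_sub ha, Real.rpow_sub hb, Real.rpow_add hb]
    field_simp
  have hB : b ^ γ / a ^ θ * a ^ θ = (b / c) ^ γ * c ^ γ := by
    rw [Real.div_rpow hb.le hc.le, div_mul_cancel₀ _ (by positivity),
      div_mul_cancel₀ _ (by positivity)]
  calc b ^ γ / a ^ θ * ‖commKernel g Z (x', y) - commKernel g Z (x'', y)‖
      ≤ b ^ γ / a ^ θ * (L * b ^ θ * ‖Z (x', y) - Z (x'', y)‖ + L * a ^ θ * ‖Z (x'', y)‖) := by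
        gcongr
        refine (norm_commKernel_sub_le g Z x' x'' y).trans ?_
        gcongr
    _ = L * ((a / b) ^ (1 - θ) * (b ^ (γ + 1) / a ^ (1 : ℝ) * ‖Z (x', y) - Z (x'', y)‖)) +
          L * ((b / c) ^ γ * (c ^ γ * ‖Z (x'', y)‖)) := by
        linear_combination L * ‖Z (x', y) - Z (x'', y)‖ * hA + L * ‖Z (x'', y)‖ * hB
    _ ≤ L * (1 * M₂) + L * (2 ^ γ * M₁) := by
        gcongr
        · exact Real.rpow_le_one (by positivity) hab (by linarith)
    _ = L * M₂ + 2 ^ γ * L * M₁ := by ring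

end Pointwise

section KernelClass

variable {n : ℕ}

theorem sSup_kerSet1_nonneg (γ₁ : ℝ) (G : Set (EuclideanSpace ℝ (Fin n)))
    (K : EuclideanSpace ℝ (Fin n) × EuclideanSpace ℝ (Fin n) → ℂ) :
    0 ≤ sSup (kerSet1 γ₁ G K) :=
  Real.sSup_nonneg fun _ ⟨_, _, _, _, _, ht⟩ => ht ▸ by positivity

theorem sSup_kerSet2_nonneg (γ₂ γ₃ : ℝ) (G : Set (EuclideanSpace ℝ (Fin n)))
    (K : EuclideanSpace ℝ (Fin n) × EuclideanSpace ℝ (Fin n) → ℂ) :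
    0 ≤ sSup (kerSet2 γ₂ γ₃ G K) :=
  Real.sSup_nonneg fun _ ⟨_, _, _, _, _, _, _, _, ht⟩ => ht ▸ by positivity

theorem kerNorm_nonneg (γ₁ γ₂ γ₃ : ℝ) (G : Set (EuclideanSpace ℝ (Fin n)))
    (K : EuclideanSpace ℝ (Fin n) × EuclideanSpace ℝ (Fin n) → ℂ) :
    0 ≤ kerNorm γ₁ γ₂ γ₃ G K :=
  add_nonneg (sSup_kerSet1_nonneg _ _ _) (sSup_kerSet2_nonneg _ _ _ _)

theorem sSup_holderSetθ_nonneg (θ : ℝ) (G : Set (EuclideanSpace ℝ (Fin n)))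
    (g : EuclideanSpace ℝ (Fin n) → ℂ) : 0 ≤ sSup (holderSetθ θ G g) :=
  Real.sSup_nonneg fun _ ⟨_, _, _, _, _, ht⟩ => ht ▸ by positivity

theorem sSup_holderSetθ_le_holderNorm (θ : ℝ) (G : Set (EuclideanSpace ℝ (Fin n)))
    (g : EuclideanSpace ℝ (Fin n) → ℂ) : sSup (holderSetθ θ G g) ≤ holderNorm θ G g :=
  le_add_of_nonneg_left (Real.sSup_nonneg fun _ ⟨_, _, ht⟩ => ht ▸ norm_nonneg _)

variable {G : Set (EuclideanSpace ℝ (Fin n))} {θ : ℝ} {g : EuclideanSpace ℝ (Fin n) → ℂ}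

theorem norm_sub_le_sSup_holderSetθ_mul (hg : BddAbove (holderSetθ θ G g))
    {x y : EuclideanSpace ℝ (Fin n)} (hx : x ∈ G) (hy : y ∈ G) :
    ‖g x - g y‖ ≤ sSup (holderSetθ θ G g) * ‖x - y‖ ^ θ := by
  rcases eq_or_ne x y with rfl | hxy
  · simpa using mul_nonneg (sSup_holderSetθ_nonneg θ G g) (Real.rpow_nonneg le_rfl θ)
  · rw [← div_le_iff₀ (Real.rpow_pos_of_pos (norm_sub_pos_iff.mpr hxy) θ)]
    exact le_csSup hg ⟨x, hx, y, hy, hxy, rfl⟩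

variable {Z : EuclideanSpace ℝ (Fin n) × EuclideanSpace ℝ (Fin n) → ℂ} {γ : ℝ}

theorem continuousOn_commKernel (hθ : 0 < θ) (hg : BddAbove (holderSetθ θ G g))
    (hZ : ContinuousOn Z ((G ×ˢ G) \ {p | p.1 = p.2})) :
    ContinuousOn (commKernel g Z) ((G ×ˢ G) \ {p | p.1 = p.2}) := by
  have hgc : ContinuousOn g G :=
    continuousOn_of_norm_sub_le_rpow hθ fun _ hx _ hy => norm_sub_le_sSup_holderSetθ_mul hg hx hy
  exact ((hgc.comp continuousOn_fst fun p hp => hp.1.1).sub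
    (hgc.comp continuousOn_snd fun p hp => hp.1.2)).mul hZ

theorem mem_upperBounds_kerSet1_commKernel (hg : BddAbove (holderSetθ θ G g))
    (hZ : BddAbove (kerSet1 γ G Z)) :
    sSup (holderSetθ θ G g) * sSup (kerSet1 γ G Z) ∈
      upperBounds (kerSet1 (γ - θ) G (commKernel g Z)) := by
  rintro _ ⟨x, hx, y, hy, hxy, rfl⟩
  exact (rpow_sub_mul_norm_commKernel_le hxy (norm_sub_le_sSup_holderSetθ_mul hg hx hy)).trans
    (mul_le_mul_of_nonneg_left (le_csSup hZ ⟨x, hx, y, hy, hxy, rfl⟩)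
      (sSup_holderSetθ_nonneg θ G g))

theorem mem_upperBounds_kerSet2_commKernel (hγ : 0 ≤ γ) (hθ : θ ≤ 1)
    (hg : BddAbove (holderSetθ θ G g)) (hZ₁ : BddAbove (kerSet1 γ G Z))
    (hZ₂ : BddAbove (kerSet2 (γ + 1) 1 G Z)) :
    sSup (holderSetθ θ G g) * sSup (kerSet2 (γ + 1) 1 G Z) +
        2 ^ γ * sSup (holderSetθ θ G g) * sSup (kerSet1 γ G Z) ∈
      upperBounds (kerSet2 γ θ G (commKernel g Z)) := by
  rintro _ ⟨x', hx', x'', hx'', y, hy, hne, hsep, rfl⟩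
  have hx''y : x'' ≠ y := by
    rintro rfl
    have := norm_sub_pos_iff.mpr hne
    linarith
  exact rpow_mul_commKernel_sub_le hγ hθ (sSup_holderSetθ_nonneg θ G g) hne hsep
    (norm_sub_le_sSup_holderSetθ_mul hg hx' hy) (norm_sub_le_sSup_holderSetθ_mul hg hx' hx'')
    (le_csSup hZ₁ ⟨x'', hx'', y, hy, hx''y, rfl⟩)
    (le_csSup hZ₂ ⟨x', hx', x'', hx'', y, hy, hne, hsep, rfl⟩)

theorem memKer_commKernel (hγ : 0 ≤ γ) (hθ₀ : 0 < θ) (hθ₁ : θ ≤ 1)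
    (hZ : memKer γ (γ + 1) 1 G Z) (hg : BddAbove (holderSetθ θ G g)) :
    memKer (γ - θ) γ θ G (commKernel g Z) :=
  ⟨continuousOn_commKernel hθ₀ hg hZ.1, ⟨_, mem_upperBounds_kerSet1_commKernel hg hZ.2.1⟩,
    ⟨_, mem_upperBounds_kerSet2_commKernel hγ hθ₁ hg hZ.2.1 hZ.2.2⟩⟩

theorem kerNorm_commKernel_le (hγ : 0 ≤ γ) (hθ : θ ≤ 1)
    (hZ : memKer γ (γ + 1) 1 G Z) (hg : BddAbove (holderSetθ θ G g)) :
    kerNorm (γ - θ) γ θ G (commKernel g Z) ≤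
      (1 + 2 ^ γ) * kerNorm γ (γ + 1) 1 G Z * sSup (holderSetθ θ G g) := by
  have hL := sSup_holderSetθ_nonneg θ G g
  have hM₁ := sSup_kerSet1_nonneg γ G Z
  have hM₂ := sSup_kerSet2_nonneg (γ + 1) 1 G Z
  have h₁ := Real.sSup_le (mem_upperBounds_kerSet1_commKernel hg hZ.2.1) (by positivity)
  have h₂ := Real.sSup_le (mem_upperBounds_kerSet2_commKernel hγ hθ hg hZ.2.1 hZ.2.2)
    (by positivity)
  rw [kerNorm, kerNorm]
  nlinarith [mul_nonneg (mul_nonneg (Real.rpow_nonneg zero_le_two γ) hL) hM₂]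

end KernelClass

theorem one_add_two_rpow_sub_one_le {n : ℕ} (hn : 1 ≤ n) : 1 + (2 : ℝ) ^ ((n : ℝ) - 1) ≤ 2 ^ n := by
  have h2n : (2 : ℝ) ≤ 2 ^ n := by simpa using pow_le_pow_right₀ one_le_two hn
  rw [Real.rpow_sub two_pos, Real.rpow_one, Real.rpow_natCast]
  linarith

theorem stmt_19_general {n : ℕ} (hn : 2 ≤ n) (G : Set (EuclideanSpace ℝ (Fin n)))
    (θ : ℝ) (hθl : 0 < θ) (hθu : θ ≤ 1)
    (Z : EuclideanSpace ℝ (Fin n) × EuclideanSpace ℝ (Fin n) → ℂ)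
    (hZ : memKer ((n : ℝ) - 1) (n : ℝ) 1 G Z)
    (g : EuclideanSpace ℝ (Fin n) → ℂ)
    (hgθ : BddAbove (holderSetθ θ G g)) :
    memKer ((n : ℝ) - 1 - θ) ((n : ℝ) - 1) θ G (fun p => (g p.1 - g p.2) * Z p) ∧
    kerNorm ((n : ℝ) - 1 - θ) ((n : ℝ) - 1) θ G (fun p => (g p.1 - g p.2) * Z p) ≤
      2 ^ n * kerNorm ((n : ℝ) - 1) (n : ℝ) 1 G Z * holderNorm θ G g := by
  have hγ : (0 : ℝ) ≤ n - 1 := by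
    have : (2 : ℝ) ≤ n := by exact_mod_cast hn
    linarith
  have hZ' : memKer ((n : ℝ) - 1) ((n : ℝ) - 1 + 1) 1 G Z := by rwa [sub_add_cancel]
  have hnorm := kerNorm_commKernel_le hγ hθu hZ' hgθ
  rw [sub_add_cancel] at hnorm
  refine ⟨memKer_commKernel hγ hθl hθu hZ' hgθ, hnorm.trans ?_⟩
  have hK := kerNorm_nonneg ((n : ℝ) - 1) (n : ℝ) 1 G Z
  have hL := sSup_holderSetθ_nonneg θ G g
  gcongr
  · exact one_add_two_rpow_sub_one_le (by omega)
  · exact sSup_holderSetθ_le_holderNorm θ G g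

/-- if `Z ∈ 𝒦_{n-1,n,1}(G)` and `g ∈ C^{0,θ}(G)`, then
`H[Z,g](x,y) = (g(x) - g(y)) Z(x,y)` belongs to `𝒦_{n-1-θ,n-1,θ}(G)` with
`‖H[Z,g]‖ ≤ 2ⁿ ‖Z‖ ‖g‖_{C^{0,θ}(G)}`. -/
theorem stmt_19 {n : ℕ} (hn : 2 ≤ n) (G : Set (EuclideanSpace ℝ (Fin n)))
    (hGne : G.Nonempty) (hGb : Bornology.IsBounded G)
    (θ : ℝ) (hθl : 0 < θ) (hθu : θ ≤ 1)
    (Z : EuclideanSpace ℝ (Fin n) × EuclideanSpace ℝ (Fin n) → ℂ)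
    (hZ : memKer ((n : ℝ) - 1) (n : ℝ) 1 G Z)
    (g : EuclideanSpace ℝ (Fin n) → ℂ)
    (hg0 : BddAbove (holderSet0 G g)) (hgθ : BddAbove (holderSetθ θ G g)) :
    memKer ((n : ℝ) - 1 - θ) ((n : ℝ) - 1) θ G (fun p => (g p.1 - g p.2) * Z p) ∧
    kerNorm ((n : ℝ) - 1 - θ) ((n : ℝ) - 1) θ G (fun p => (g p.1 - g p.2) * Z p) ≤
      2 ^ n * kerNorm ((n : ℝ) - 1) (n : ℝ) 1 G Z * holderNorm θ G g :=
  stmt_19_general hn G θ hθl hθu Z hZ g hgθ
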